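/- Define a(n) = Σ_{k=0}^n C(4k,2k) * C(2k,k)^2 * C(n+k, n-k) * (-64)^{n-k}. Then for all n ≥ 0, (n+2)^3 * a(n+2) + 8(2n+3)(8n^2+24n+21) * a(n+1) + 4096 (n+1)^3 * a(n) = 0. -/

import Mathlib

/-!
Creative telescoping. Divided by `(-64)^n`, `a n` is the sum over `k` of
`F(n, k) = (4k)!/(k!)^4 * C(n+k, 2k) * (-1/64)^k`, and the recurrence operator applied to `F(·, k)`
equals `G(n, k+1) - G(n, k)` for an explicit certificate `G`. As `F` and `G` are hypergeometric in
both variables, this is a rational-function identity once every binomial coefficient is written as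
a rational multiple of one of them. Summing over `k` telescopes, since `G(n, 0) = 0 = G(n, n+3)`.
-/

open Finset

theorem Nat.cast_choose_succ_right_mul {R : Type*} [CommRing R] (m j : ℕ) :
    (m.choose (j + 1) : R) * (j + 1) = m.choose j * (m - j) := by
  rcases le_or_gt j m with hjm | hmj
  · exact_mod_cast congrArg (Nat.cast : ℕ → R) (Nat.choose_succ_right_eq m j) |>.trans
      (by push_cast [Nat.cast_sub hjm]; ring)
  · simp [Nat.choose_eq_zero_of_lt hmj, Nat.choose_eq_zero_of_lt (Nat.lt_succ_of_lt hmj)]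

theorem Nat.cast_choose_succ_succ_eq {K : Type*} [Field K] [CharZero K] (m j : ℕ) :
    ((m + 1).choose (j + 1) : K) = (m + 1) / (j + 1) * m.choose j := by
  rw [div_mul_eq_mul_div, eq_div_iff (Nat.cast_add_one_ne_zero j)]
  exact_mod_cast (Nat.add_one_mul_choose_eq m j).symm

theorem Nat.cast_choose_succ_right_eq {K : Type*} [Field K] [CharZero K] (m j : ℕ) :
    (m.choose (j + 1) : K) = (m - j) / (j + 1) * m.choose j := by
  rw [div_mul_eq_mul_div, eq_div_iff (Nat.cast_add_one_ne_zero j), Nat.cast_choose_succ_right_mul,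
    mul_comm]

namespace QuadBinomSum

/-- `(4k)! / (k!)^4`. -/
def coeff (k : ℕ) : ℕ := (4 * k).choose (2 * k) * (2 * k).choose k ^ 2

lemma coeff_eq_centralBinom (k : ℕ) : coeff k = (2 * k).centralBinom * k.centralBinom ^ 2 := by
  rw [coeff, Nat.centralBinom, Nat.centralBinom, show 2 * (2 * k) = 4 * k by ring]

lemma coeff_succ_mul (k : ℕ) :
    coeff (k + 1) * (k + 1) ^ 3 = 8 * (4 * k + 1) * (4 * k + 3) * (2 * k + 1) * coeff k := by
  have h₂ := Nat.succ_mul_centralBinom_succ (2 * k + 1)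
  have h₁ := Nat.succ_mul_centralBinom_succ (2 * k)
  have h₀ := Nat.succ_mul_centralBinom_succ k
  rw [coeff_eq_centralBinom, coeff_eq_centralBinom, show 2 * (k + 1) = 2 * k + 1 + 1 by ring]
  refine Nat.eq_of_mul_eq_mul_left (show 0 < 2 * (2 * k + 1) by positivity) ?_
  linear_combination (2 * k + 1) * (k + 1) ^ 2 * (k + 1).centralBinom ^ 2 * h₂
    + 2 * (4 * k + 3) * (k + 1) ^ 2 * (k + 1).centralBinom ^ 2 * h₁
    + 4 * (4 * k + 3) * (4 * k + 1) * (2 * k).centralBinom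
      * ((k + 1) * (k + 1).centralBinom + 2 * (2 * k + 1) * k.centralBinom) * h₀

def summand (n k : ℕ) : ℚ := coeff k * (n + k).choose (2 * k) * (-64 : ℚ)⁻¹ ^ k

/-- Zeilberger's certificate for `summand`. -/
def cert (n : ℕ) : ℕ → ℚ
  | 0 => 0
  | k + 1 => 8 * (2 * n + 3) * (4 * k + 1) * (4 * k + 3) * coeff k *
      (n + k + 1).choose (2 * k) * (-64 : ℚ)⁻¹ ^ k

lemma summand_recurrence (n k : ℕ) :
    64 * ((n : ℚ) + 2) ^ 3 * summand (n + 2) k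
      - 8 * (2 * n + 3) * (8 * n ^ 2 + 24 * n + 21) * summand (n + 1) k
      + 64 * ((n : ℚ) + 1) ^ 3 * summand n k
    = cert n (k + 1) - cert n k := by
  cases k with
  | zero => simp [summand, cert, coeff]; ring
  | succ k =>
    have hc : (coeff (k + 1) : ℚ) =
        8 * (4 * k + 1) * (4 * k + 3) * (2 * k + 1) / (k + 1) ^ 3 * coeff k := by
      rw [div_mul_eq_mul_div, eq_div_iff (by positivity)]
      exact_mod_cast coeff_succ_mul k
    simp only [summand, cert]
    -- every binomial coefficient becomes a rational multiple of `C(n+k+1, 2k)`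
    rw [show n + 2 + (k + 1) = n + k + 1 + 1 + 1 by ring,
      show n + 1 + (k + 1) = n + k + 1 + 1 by ring, show n + (k + 1) + 1 = n + k + 1 + 1 by ring,
      show n + (k + 1) = n + k + 1 by ring, show 2 * (k + 1) = 2 * k + 1 + 1 by ring,
      Nat.cast_choose_succ_succ_eq (n + k + 1 + 1) (2 * k + 1),
      Nat.cast_choose_succ_succ_eq (n + k + 1) (2 * k + 1),
      Nat.cast_choose_succ_succ_eq (n + k + 1) (2 * k),
      Nat.cast_choose_succ_right_eq (n + k + 1) (2 * k + 1),
      Nat.cast_choose_succ_right_eq (n + k + 1) (2 * k), hc]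
    push_cast
    field_simp
    ring

lemma summand_eq_zero_of_lt {n k : ℕ} (h : n < k) : summand n k = 0 := by
  simp [summand, Nat.choose_eq_zero_of_lt (by omega : n + k < 2 * k)]

/-- `a n / (-64) ^ n`; the rescaling keeps the truncated exponent `n - k` out of the certificate. -/
def rescaled (n : ℕ) : ℚ := ∑ k ∈ range (n + 1), summand n k

lemma sum_range_summand_of_lt {n N : ℕ} (h : n < N) :
    ∑ k ∈ range N, summand n k = rescaled n :=
  (sum_subset (range_subset_range.mpr h) fun _ _ hk ↦
    summand_eq_zero_of_lt (by simpa using hk)).symm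

lemma rescaled_recurrence (n : ℕ) :
    64 * ((n : ℚ) + 2) ^ 3 * rescaled (n + 2)
      - 8 * (2 * n + 3) * (8 * n ^ 2 + 24 * n + 21) * rescaled (n + 1)
      + 64 * ((n : ℚ) + 1) ^ 3 * rescaled n = 0 := by
  have hcert : cert n (n + 3) = 0 := by
    simp [cert, Nat.choose_eq_zero_of_lt (by omega : n + (n + 2) + 1 < 2 * (n + 2))]
  rw [← sum_range_summand_of_lt (by omega : n + 2 < n + 3),
    ← sum_range_summand_of_lt (by omega : n + 1 < n + 3),
    ← sum_range_summand_of_lt (by omega : n < n + 3),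
    mul_sum, mul_sum, mul_sum, ← sum_sub_distrib, ← sum_add_distrib,
    sum_congr rfl fun k _ ↦ summand_recurrence n k, sum_range_sub, hcert, cert, sub_zero]

lemma cast_sum_eq_rescaled (n : ℕ) :
    ((∑ k ∈ range (n + 1), (Nat.choose (4 * k) (2 * k) : ℤ) * (Nat.choose (2 * k) k) ^ 2 *
      (Nat.choose (n + k) (n - k)) * (-64 : ℤ) ^ (n - k) : ℤ) : ℚ) =
      (-64) ^ n * rescaled n := by
  rw [rescaled, mul_sum]
  push_cast
  refine sum_congr rfl fun k hk ↦ ?_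
  have hkn : k ≤ n := Nat.lt_succ_iff.mp (mem_range.mp hk)
  rw [summand, coeff, ← Nat.choose_symm_of_eq_add (by omega : n + k = (n - k) + 2 * k),
    pow_sub₀ _ (by norm_num) hkn, inv_pow]
  push_cast
  ring

end QuadBinomSum

theorem stmt_3 (a : ℕ → ℤ)
    (ha : ∀ n : ℕ, a n = ∑ k ∈ Finset.range (n + 1),
      (Nat.choose (4*k) (2*k) : ℤ) * (Nat.choose (2*k) k) ^ 2 *
        (Nat.choose (n + k) (n - k)) * (-64 : ℤ) ^ (n - k)) :
    ∀ n : ℕ,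
      ((n : ℤ) + 2) ^ 3 * a (n + 2) +
        8 * (2 * (n : ℤ) + 3) * (8 * (n : ℤ) ^ 2 + 24 * n + 21) * a (n + 1) +
        4096 * ((n : ℤ) + 1) ^ 3 * a n = 0 := by
  intro n
  have hrec := QuadBinomSum.rescaled_recurrence n
  have hcast : ∀ m, (a m : ℚ) = (-64) ^ m * QuadBinomSum.rescaled m := fun m ↦
    (congrArg _ (ha m)).trans (QuadBinomSum.cast_sum_eq_rescaled m)
  suffices h : ((n : ℚ) + 2) ^ 3 * a (n + 2) +
      8 * (2 * (n : ℚ) + 3) * (8 * (n : ℚ) ^ 2 + 24 * n + 21) * a (n + 1) +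
      4096 * ((n : ℚ) + 1) ^ 3 * a n = 0 by exact_mod_cast h
  rw [hcast, hcast, hcast]
  linear_combination 64 * (-64 : ℚ) ^ n * hrec
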